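/- Let k be a commutative ring, S a type, M a k-module, and μ : M →ₗ[k] M ⊗[k] (S →₀ k) a counital coassociative coaction of S →₀ k on M. For each s ∈ S, let p_s : M →ₗ[k] M be the composite of μ with id_M ⊗ (evaluation at s) followed by the canonical isomorphism M ⊗[k] k ≅ M. Then: (1) p_s ∘ p_s = p_s for every s; (2) p_s ∘ p_t = 0 whenever s ≠ t; (3) for every m ∈ M the family (p_s m)_{s ∈ S} has finite support and Σ_{s ∈ S} p_s m = m; and (4) the family of submodules (LinearMap.range p_s)_{s ∈ S} is an internal direct sum decomposition of M. -/

import Mathlib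

/-!
A `C`-comodule `M` is a module over the convolution algebra `C →ₗ[k] k`, with `φ` acting by
`(id ⊗ φ) ∘ μ` followed by `M ⊗ k ≅ M`: coassociativity makes this action multiplicative and
counitality makes the counit act as the identity. The projection `p_s` is the action of the
evaluation `ev_s`. For `C = S →₀ k`, whose basis is grouplike, the convolution of `ev_t` and
`ev_u` is `δ_tu ev_u` and the counit is `∑ₛ ev_s`, so the `p_s` are orthogonal idempotents
summing to the identity, and such a family splits a module into the direct sum of its images.
-/

open TensorProduct

noncomputable section

variable {k S M : Type*} [CommRing k] [AddCommGroup M] [Module k M]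

/-- Given a coaction `μ` of `S →₀ k` on `M`, the projection `p_s : M →ₗ[k] M` is the
composite of `μ` with `id ⊗ (evaluation at s)` followed by `M ⊗[k] k ≅ M`. -/
def coactionProj (μ : M →ₗ[k] M ⊗[k] (S →₀ k)) (s : S) : M →ₗ[k] M :=
  (TensorProduct.rid k M).toLinearMap ∘ₗ TensorProduct.map LinearMap.id (Finsupp.lapply s) ∘ₗ μ

end

namespace TensorProduct

variable {k C M N : Type*} [CommSemiring k] [AddCommMonoid C] [Module k C]
  [AddCommMonoid M] [Module k M] [AddCommMonoid N] [Module k N]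

lemma rid_comp_map (f : M →ₗ[k] N) (φ : C →ₗ[k] k) :
    (TensorProduct.rid k N).toLinearMap ∘ₗ map f φ
      = f ∘ₗ (TensorProduct.rid k M).toLinearMap ∘ₗ map LinearMap.id φ := by
  ext; simp

lemma rid_comp_map_rid_comp_assoc_symm (φ ψ : C →ₗ[k] k) :
    (TensorProduct.rid k M).toLinearMap
        ∘ₗ map ((TensorProduct.rid k M).toLinearMap ∘ₗ map LinearMap.id φ) ψ
        ∘ₗ (TensorProduct.assoc k M C C).symm.toLinearMap
      = (TensorProduct.rid k M).toLinearMap ∘ₗ map LinearMap.id (LinearMap.mul' k k ∘ₗ map φ ψ) := by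
  ext; simp [smul_smul, mul_comm]

end TensorProduct

section Coaction

variable {k C M : Type*} [CommSemiring k] [AddCommMonoid C] [Module k C]
  [AddCommMonoid M] [Module k M]

def coactionDualAct (μ : M →ₗ[k] M ⊗[k] C) (φ : C →ₗ[k] k) : M →ₗ[k] M :=
  (TensorProduct.rid k M).toLinearMap ∘ₗ map LinearMap.id φ ∘ₗ μ

variable [CoalgebraStruct k C] {μ : M →ₗ[k] M ⊗[k] C}

lemma coactionDualAct_counit
    (hcounit : map LinearMap.id Coalgebra.counit ∘ₗ μ
      = (TensorProduct.rid k M).symm.toLinearMap) :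
    coactionDualAct μ Coalgebra.counit = LinearMap.id := by
  rw [coactionDualAct, hcounit, ← LinearEquiv.coe_trans, LinearEquiv.symm_trans_self]
  rfl

lemma coactionDualAct_comp
    (hcoassoc : map μ LinearMap.id ∘ₗ μ
      = (TensorProduct.assoc k M C C).symm.toLinearMap
          ∘ₗ map LinearMap.id Coalgebra.comul ∘ₗ μ)
    (φ ψ : C →ₗ[k] k) :
    coactionDualAct μ φ ∘ₗ coactionDualAct μ ψ
      = coactionDualAct μ (LinearMap.mul' k k ∘ₗ map φ ψ ∘ₗ Coalgebra.comul) := by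
  set F := (TensorProduct.rid k M).toLinearMap ∘ₗ
    map ((TensorProduct.rid k M).toLinearMap ∘ₗ map LinearMap.id φ) ψ
  have hF : F ∘ₗ map μ LinearMap.id
      = (TensorProduct.rid k M).toLinearMap ∘ₗ map (coactionDualAct μ φ) ψ := by
    rw [LinearMap.comp_assoc, ← map_comp, LinearMap.comp_id]; rfl
  calc coactionDualAct μ φ ∘ₗ coactionDualAct μ ψ
      = ((TensorProduct.rid k M).toLinearMap ∘ₗ map (coactionDualAct μ φ) ψ) ∘ₗ μ := by
        rw [rid_comp_map]; rfl
    _ = F ∘ₗ (TensorProduct.assoc k M C C).symm.toLinearMap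
          ∘ₗ map LinearMap.id Coalgebra.comul ∘ₗ μ := by
        rw [← hF, LinearMap.comp_assoc, hcoassoc]
    _ = ((TensorProduct.rid k M).toLinearMap ∘ₗ
          map LinearMap.id (LinearMap.mul' k k ∘ₗ map φ ψ))
          ∘ₗ map LinearMap.id Coalgebra.comul ∘ₗ μ := by
        rw [← rid_comp_map_rid_comp_assoc_symm]; rfl
    _ = _ := by
        rw [coactionDualAct, LinearMap.comp_assoc]
        congr 1
        rw [← LinearMap.comp_assoc, ← map_comp, LinearMap.comp_id]
        rfl

end Coaction

lemma coactionProj_eq_coactionDualAct {k S M : Type*} [CommRing k] [AddCommGroup M] [Module k M]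
    (μ : M →ₗ[k] M ⊗[k] (S →₀ k)) (s : S) :
    coactionProj μ s = coactionDualAct μ (Finsupp.lapply s) :=
  rfl

section FreeCoalgebra

variable {k S M : Type*} [CommSemiring k] [DecidableEq S] [AddCommMonoid M] [Module k M]

lemma Finsupp.mul'_comp_map_lapply_comp_comul (t u : S) :
    LinearMap.mul' k k ∘ₗ map (Finsupp.lapply t) (Finsupp.lapply u)
        ∘ₗ Coalgebra.comul = if t = u then Finsupp.lapply u else 0 := by
  ext s
  simp only [LinearMap.coe_comp, Function.comp_apply, Finsupp.lsingle_apply, Finsupp.comul_single,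
    CommSemiring.comul_apply, TensorProduct.map_tmul, Finsupp.lapply_apply, LinearMap.mul'_apply,
    Finsupp.single_apply, mul_ite, mul_one, mul_zero]
  split_ifs <;> simp_all

lemma Finsupp.rid_comp_map_counit :
    (TensorProduct.rid k M).toLinearMap ∘ₗ map LinearMap.id Coalgebra.counit
      = Finsupp.lsum k (fun _ => LinearMap.id) ∘ₗ (finsuppScalarRight k k M S).toLinearMap := by
  ext m s
  simp [finsuppScalarRight_apply_tmul]

end FreeCoalgebra

section Grouplike

variable {k S M : Type*} [CommRing k] [DecidableEq S] [AddCommGroup M] [Module k M]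
  {μ : M →ₗ[k] M ⊗[k] (S →₀ k)}

lemma coactionProj_apply (μ : M →ₗ[k] M ⊗[k] (S →₀ k)) (s : S) (m : M) :
    coactionProj μ s m = finsuppScalarRight k k M S (μ m) s := by
  rw [finsuppScalarRight_apply]
  simp [coactionProj, LinearMap.lTensor, AlgebraTensorModule.rid_eq_rid]

lemma finite_support_coactionProj (μ : M →ₗ[k] M ⊗[k] (S →₀ k)) (m : M) :
    (Function.support fun s => coactionProj μ s m).Finite := by
  simp_rw [coactionProj_apply]
  exact (finsuppScalarRight k k M S (μ m)).hasFiniteSupport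

lemma finsum_coactionProj
    (hcounit : map LinearMap.id Coalgebra.counit ∘ₗ μ
      = (TensorProduct.rid k M).symm.toLinearMap) (m : M) :
    ∑ᶠ s, coactionProj μ s m = m := by
  calc ∑ᶠ s, coactionProj μ s m = (finsuppScalarRight k k M S (μ m)).sum fun _ x => x := by
        simp_rw [coactionProj_apply]
        exact finsum_eq_sum_of_support_subset _ (Finsupp.fun_support_eq _).le
    _ = coactionDualAct μ Coalgebra.counit m := by
        rw [coactionDualAct, ← LinearMap.comp_assoc, Finsupp.rid_comp_map_counit]
        rfl
    _ = m := by rw [coactionDualAct_counit hcounit, LinearMap.id_apply]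

lemma coactionProj_comp_coactionProj
    (hcoassoc : map μ LinearMap.id ∘ₗ μ
      = (TensorProduct.assoc k M (S →₀ k) (S →₀ k)).symm.toLinearMap
          ∘ₗ map LinearMap.id Coalgebra.comul ∘ₗ μ) (t u : S) :
    coactionProj μ t ∘ₗ coactionProj μ u = if t = u then coactionProj μ u else 0 := by
  rw [coactionProj_eq_coactionDualAct, coactionProj_eq_coactionDualAct,
    coactionDualAct_comp hcoassoc, Finsupp.mul'_comp_map_lapply_comp_comul]
  split_ifs
  · rfl
  · simp [coactionDualAct]

end Grouplike

theorem DirectSum.isInternal_range_of_orthogonal_idempotents {R ι M : Type*} [Ring R]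
    [DecidableEq ι] [AddCommGroup M] [Module R M] (p : ι → M →ₗ[R] M)
    (hidem : ∀ i, p i ∘ₗ p i = p i) (horth : ∀ i j, i ≠ j → p i ∘ₗ p j = 0)
    (hsum : ∀ m, ∑ᶠ i, p i m = m) :
    DirectSum.IsInternal fun i => LinearMap.range (p i) := by
  apply DirectSum.isInternal_submodule_of_iSupIndep_of_iSup_eq_top
  · intro i
    rw [disjoint_iff_inf_le]
    rintro _ ⟨⟨m, rfl⟩, hm⟩
    have hker : (⨆ j, ⨆ _ : j ≠ i, LinearMap.range (p j)) ≤ LinearMap.ker (p i) :=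
      iSup₂_le fun j hji => LinearMap.range_le_ker_iff.mpr (horth i j (Ne.symm hji))
    calc p i m = p i (p i m) := by rw [← LinearMap.comp_apply, hidem]
      _ = 0 := hker hm
  · refine eq_top_iff.mpr fun m _ => hsum m ▸ ?_
    exact finsum_induction _ (zero_mem _) (fun _ _ => add_mem)
      fun i => Submodule.mem_iSup_of_mem i (LinearMap.mem_range_self _ _)

/-- A counital coassociative coaction of `S →₀ k` on `M` yields a family of orthogonal
idempotent projections `p_s` summing to the identity, whose images form an internal
direct sum decomposition of `M`. -/
theorem decomposition_of_coaction
    {k S M : Type*} [CommRing k] [DecidableEq S] [AddCommGroup M] [Module k M]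
    (μ : M →ₗ[k] M ⊗[k] (S →₀ k))
    (hcounit : TensorProduct.map LinearMap.id Coalgebra.counit ∘ₗ μ
      = (TensorProduct.rid k M).symm.toLinearMap)
    (hcoassoc : TensorProduct.map μ LinearMap.id ∘ₗ μ
      = (TensorProduct.assoc k M (S →₀ k) (S →₀ k)).symm.toLinearMap
          ∘ₗ TensorProduct.map LinearMap.id Coalgebra.comul ∘ₗ μ) :
    (∀ s : S, coactionProj μ s ∘ₗ coactionProj μ s = coactionProj μ s) ∧
    (∀ s t : S, s ≠ t → coactionProj μ s ∘ₗ coactionProj μ t = 0) ∧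
    (∀ m : M, (Function.support fun s : S => coactionProj μ s m).Finite ∧
      ∑ᶠ s : S, coactionProj μ s m = m) ∧
    DirectSum.IsInternal fun s : S => LinearMap.range (coactionProj μ s) := by
  have hidem (s : S) : coactionProj μ s ∘ₗ coactionProj μ s = coactionProj μ s := by
    simpa using coactionProj_comp_coactionProj hcoassoc s s
  have horth (s t : S) (hst : s ≠ t) : coactionProj μ s ∘ₗ coactionProj μ t = 0 := by
    simpa [hst] using coactionProj_comp_coactionProj hcoassoc s t
  have hsum := finsum_coactionProj hcounit
  exact ⟨hidem, horth, fun m => ⟨finite_support_coactionProj μ m, hsum m⟩,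
    DirectSum.isInternal_range_of_orthogonal_idempotents _ hidem horth hsum⟩
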